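/- arXiv:2502.05068 — 2 statements merged into one kernel-verified Lean document; each statement's English description precedes it below -/
import Mathlib

section
/- Resolvent divergence criterion for the Lyapunov exponent: Let V be a finite nonempty index set and A an irreducible Metzler real matrix indexed by V with Perron root λ* (λ* is an eigenvalue of A and every complex eigenvalue of A has real part at most λ*). Then for every real α and all indices σ, σ' ∈ V, the extended-real integral ∫₀^∞ ENNReal.ofReal( (exp(t·(A − α·1)))_{σ',σ} ) dt equals +∞ if and only if α ≤ λ*. In particular, the conditions 'λ* ≥ α', 'the integral diverges for some pair (σ,σ')', and 'the integral diverges for every pair (σ,σ')' are equivalent. -/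
open scoped ENNReal

/-- A complex number `μ` is an eigenvalue of the real matrix `M`
(via its complexification). -/
def Matrix.IsComplexEigenvalue {V : Type*} [Fintype V] (M : Matrix V V ℝ) (μ : ℂ) : Prop :=
  ∃ v : V → ℂ, v ≠ 0 ∧ (M.map (Complex.ofReal)).mulVec v = μ • v

/-- `lam` is the Perron root (Lyapunov exponent) of `A`: it is a real eigenvalue
of `A` and dominates the real part of every complex eigenvalue. -/
def Matrix.IsPerronRoot {V : Type*} [Fintype V] (A : Matrix V V ℝ) (lam : ℝ) : Prop :=
  (∃ v : V → ℝ, v ≠ 0 ∧ A.mulVec v = lam • v) ∧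
  ∀ μ : ℂ, A.IsComplexEigenvalue μ → μ.re ≤ lam

/-- `A` is a Metzler matrix: all off-diagonal entries are nonnegative. -/
def Matrix.IsMetzler {V : Type*} (A : Matrix V V ℝ) : Prop :=
  ∀ σ σ' : V, σ ≠ σ' → 0 ≤ A σ' σ

/-- `A` is irreducible: any two distinct indices are connected by a chain of
strictly positive transition entries. -/
def Matrix.IsIrreducibleMetzlerChain {V : Type*} (A : Matrix V V ℝ) : Prop :=
  ∀ σ σ' : V, σ ≠ σ' → Relation.TransGen (fun x y => x ≠ y ∧ 0 < A y x) σ σ'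

/-!
If `lam < α`, every complex eigenvalue of `A - α` has negative real part. Decomposing a basis
vector into generalized eigenvectors of the complexification of `A` shows that the entries of
`exp (t (A - α))` decay exponentially, so the integrals are finite.

If `α ≤ lam`, take a real eigenvector `v` for `lam` and an index `k` where `|v|` is maximal.
Since `exp (t (A - α))` is entrywise nonnegative (`A` is Metzler) and multiplies `v` by
`e^{t (lam - α)} ≥ 1`, its `k`-th row sums to at least `1`. Irreducibility makes `exp (A - α)`
entrywise positive, and sandwiching `exp ((t - 2) (A - α))` between two copies of it bounds every
entry of `exp (t (A - α))` below by a positive constant for `t > 2`.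
-/

open NormedSpace MeasureTheory Set
open scoped Matrix Matrix.Norms.Operator

theorem MeasureTheory.lintegral_Ioi_ofReal_eq_top_of_le {f : ℝ → ℝ} {a T c : ℝ} (hc : 0 < c)
    (hT : a ≤ T) (hf : ∀ t, T < t → c ≤ f t) :
    ∫⁻ t in Ioi a, ENNReal.ofReal (f t) = ∞ := by
  refine top_unique ?_
  calc ∞ = ∫⁻ _ in Ioi T, ENNReal.ofReal c := by
        rw [setLIntegral_const, Real.volume_Ioi, ENNReal.mul_top (ENNReal.ofReal_pos.2 hc).ne']
    _ ≤ ∫⁻ t in Ioi T, ENNReal.ofReal (f t) :=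
        setLIntegral_mono' measurableSet_Ioi fun t ht => ENNReal.ofReal_le_ofReal (hf t ht)
    _ ≤ ∫⁻ t in Ioi a, ENNReal.ofReal (f t) := lintegral_mono_set (Ioi_subset_Ioi hT)

namespace Matrix

variable {V : Type*}

section GeneralizedEigenvector

variable [Fintype V] [DecidableEq V] {𝕂 : Type*} [RCLike 𝕂]

theorem hasSum_exp_mulVec (M : Matrix V V 𝕂) (w : V → 𝕂) :
    HasSum (fun n => (n.factorial⁻¹ : 𝕂) • (M ^ n *ᵥ w)) (exp M *ᵥ w) := by
  let L : Matrix V V 𝕂 →ₗ[𝕂] V → 𝕂 :=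
    { toFun X := X *ᵥ w
      map_add' X Y := add_mulVec X Y w
      map_smul' c X := smul_mulVec c X w }
  have h := (exp_series_hasSum_exp' (𝕂 := 𝕂) M).mapL L.toContinuousLinearMap
  simp only [LinearMap.coe_toContinuousLinearMap', L, LinearMap.coe_mk, AddHom.coe_mk,
    smul_mulVec] at h
  exact h

theorem exp_mulVec_of_pow_mulVec_eq_zero (M : Matrix V V 𝕂) {w : V → 𝕂} {k : ℕ}
    (hk : M ^ k *ᵥ w = 0) :
    exp M *ᵥ w = ∑ n ∈ Finset.range k, (n.factorial⁻¹ : 𝕂) • (M ^ n *ᵥ w) := by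
  refine (hasSum_exp_mulVec M w).unique (hasSum_sum_of_ne_finset_zero fun n hn => ?_)
  obtain ⟨m, rfl⟩ := Nat.exists_eq_add_of_le (not_lt.mp (Finset.mem_range.not.mp hn))
  rw [add_comm, pow_add, ← mulVec_mulVec, hk, mulVec_zero, smul_zero]

theorem exp_add_smul_one (M : Matrix V V 𝕂) (r : 𝕂) :
    exp (M + r • (1 : Matrix V V 𝕂)) = exp r • exp M := by
  rw [exp_add_of_commute _ _ ((Commute.one_right M).smul_right r), smul_one_eq_diagonal,
    exp_diagonal, Pi.exp_def, ← smul_one_eq_diagonal, mul_smul_comm, mul_one]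

theorem exp_sub_smul_one (M : Matrix V V 𝕂) (r : 𝕂) :
    exp (M - r • (1 : Matrix V V 𝕂)) = exp (-r) • exp M := by
  rw [sub_eq_add_neg, ← neg_smul, exp_add_smul_one]

theorem exp_mulVec_of_pow_sub_smul_one_mulVec_eq_zero (M : Matrix V V 𝕂) {μ : 𝕂}
    {w : V → 𝕂} {k : ℕ} (hk : (M - μ • (1 : Matrix V V 𝕂)) ^ k *ᵥ w = 0) :
    exp M *ᵥ w = exp μ •
      ∑ n ∈ Finset.range k, (n.factorial⁻¹ : 𝕂) • ((M - μ • (1 : Matrix V V 𝕂)) ^ n *ᵥ w) := by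
  rw [← exp_mulVec_of_pow_mulVec_eq_zero _ hk, ← smul_mulVec, ← exp_add_smul_one,
    sub_add_cancel]

theorem exp_mulVec_of_mulVec_eq_smul (M : Matrix V V 𝕂) {μ : 𝕂} {w : V → 𝕂}
    (hw : M *ᵥ w = μ • w) : exp M *ᵥ w = exp μ • w := by
  have hk : (M - μ • (1 : Matrix V V 𝕂)) ^ 1 *ᵥ w = 0 := by
    rw [pow_one, sub_mulVec, smul_mulVec, one_mulVec, hw, sub_self]
  simpa using exp_mulVec_of_pow_sub_smul_one_mulVec_eq_zero M hk

end GeneralizedEigenvector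

section GrowthBound

variable [Fintype V] [DecidableEq V]

theorem exists_norm_exp_smul_mulVec_le {M : Matrix V V ℂ} {μ : ℂ} {w : V → ℂ} {k : ℕ}
    (hk : (M - μ • (1 : Matrix V V ℂ)) ^ k *ᵥ w = 0) {ρ : ℝ} (hρ : μ.re < ρ) :
    ∃ C, ∀ t : ℝ, 0 ≤ t → ‖exp ((t : ℂ) • M) *ᵥ w‖ ≤ C * Real.exp (t * ρ) := by
  set N := M - μ • (1 : Matrix V V ℂ)
  set ε := ρ - μ.re with hε
  have hε0 : 0 < ε := sub_pos.2 hρ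
  refine ⟨∑ n ∈ Finset.range k, ‖N ^ n *ᵥ w‖ / ε ^ n, fun t ht => ?_⟩
  have hshift : (t : ℂ) • M - ((t : ℂ) * μ) • (1 : Matrix V V ℂ) = (t : ℂ) • N := by
    rw [smul_sub, smul_smul]
  have hk' : ((t : ℂ) • M - ((t : ℂ) * μ) • (1 : Matrix V V ℂ)) ^ k *ᵥ w = 0 := by
    rw [hshift, smul_pow, smul_mulVec, hk, smul_zero]
  have hterm : ∀ n, t ^ n / n.factorial ≤ Real.exp (ε * t) / ε ^ n := fun n => by
    rw [le_div_iff₀ (by positivity), div_mul_eq_mul_div, ← mul_pow, mul_comm t]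
    exact Real.pow_div_factorial_le_exp (ε * t) (by positivity) n
  have hsum : ‖∑ n ∈ Finset.range k,
      (n.factorial⁻¹ : ℂ) • (((t : ℂ) • M - ((t : ℂ) * μ) • (1 : Matrix V V ℂ)) ^ n *ᵥ w)‖
      ≤ Real.exp (ε * t) * ∑ n ∈ Finset.range k, ‖N ^ n *ᵥ w‖ / ε ^ n := by
    rw [Finset.mul_sum]
    refine (norm_sum_le _ _).trans (Finset.sum_le_sum fun n _ => ?_)
    rw [hshift, smul_pow, smul_mulVec, smul_smul, norm_smul, norm_mul, norm_inv,
      Complex.norm_natCast, norm_pow, Complex.norm_real, Real.norm_of_nonneg ht]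
    calc _ = t ^ n / n.factorial * ‖N ^ n *ᵥ w‖ := by ring
      _ ≤ Real.exp (ε * t) / ε ^ n * ‖N ^ n *ᵥ w‖ :=
        mul_le_mul_of_nonneg_right (hterm n) (norm_nonneg _)
      _ = _ := by ring
  rw [exp_mulVec_of_pow_sub_smul_one_mulVec_eq_zero _ hk', norm_smul, ← Complex.exp_eq_exp_ℂ,
    Complex.norm_exp, Complex.re_ofReal_mul]
  calc Real.exp (t * μ.re) * ‖_‖
      ≤ Real.exp (t * μ.re) * (Real.exp (ε * t) * ∑ n ∈ Finset.range k, ‖N ^ n *ᵥ w‖ / ε ^ n) :=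
        mul_le_mul_of_nonneg_left hsum (Real.exp_pos _).le
    _ = _ := by
        rw [← mul_assoc, ← Real.exp_add, mul_comm, hε]
        congr 2
        ring

theorem mem_maxGenEigenspace_toLin'_iff {R : Type*} [CommRing R] (M : Matrix V V R) (μ : R)
    (w : V → R) :
    w ∈ Module.End.maxGenEigenspace (toLin' M) μ ↔
      ∃ k : ℕ, (M - μ • (1 : Matrix V V R)) ^ k *ᵥ w = 0 := by
  have h : toLin' M - μ • 1 = toLinAlgEquiv' (M - μ • 1) := by
    rw [map_sub, map_smul, map_one]
    rfl
  simp only [Module.End.mem_maxGenEigenspace, h, ← map_pow, toLinAlgEquiv'_apply]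

theorem isComplexEigenvalue_of_mem_maxGenEigenspace {A : Matrix V V ℝ} {μ : ℂ} {w : V → ℂ}
    (hw : w ∈ Module.End.maxGenEigenspace (toLin' (A.map ((↑) : ℝ → ℂ))) μ) (hw0 : w ≠ 0) :
    A.IsComplexEigenvalue μ := by
  have hμ : Module.End.HasEigenvalue (toLin' (A.map ((↑) : ℝ → ℂ))) μ :=
    Module.End.HasUnifEigenvalue.lt zero_lt_one ((Submodule.ne_bot_iff _).2 ⟨w, hw, hw0⟩)
  obtain ⟨v, hv⟩ := hμ.exists_hasEigenvector
  exact ⟨v, hv.2, by simpa only [toLin'_apply] using hv.apply_eq_smul⟩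

theorem map_ofReal_exp (M : Matrix V V ℝ) :
    (exp M).map ((↑) : ℝ → ℂ) = exp (M.map (↑)) :=
  map_exp (Complex.ofRealHom.mapMatrix (m := V))
    (Continuous.matrix_map continuous_id Complex.continuous_ofReal) M

theorem exists_abs_exp_smul_apply_le {A : Matrix V V ℝ} {ρ : ℝ}
    (hspec : ∀ μ, A.IsComplexEigenvalue μ → μ.re < ρ) (i j : V) :
    ∃ C, ∀ t : ℝ, 0 ≤ t → |exp (t • A) i j| ≤ C * Real.exp (t * ρ) := by
  set Ac := A.map ((↑) : ℝ → ℂ)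
  have hdec : Pi.single j 1 ∈ ⨆ μ, Module.End.maxGenEigenspace (toLin' Ac) μ := by
    rw [Module.End.iSup_maxGenEigenspace_eq_top]
    trivial
  obtain ⟨c, hc, hsum⟩ := (Submodule.mem_iSup_iff_exists_finsupp _ _).1 hdec
  have hbound : ∀ μ ∈ c.support, ∃ C, ∀ t : ℝ, 0 ≤ t →
      ‖exp ((t : ℂ) • Ac) *ᵥ c μ‖ ≤ C * Real.exp (t * ρ) := fun μ hμ => by
    obtain ⟨k, hk⟩ := (mem_maxGenEigenspace_toLin'_iff _ _ _).1 (hc μ)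
    exact exists_norm_exp_smul_mulVec_le hk
      (hspec μ (isComplexEigenvalue_of_mem_maxGenEigenspace (hc μ) (Finsupp.mem_support_iff.1 hμ)))
  choose! C hC using hbound
  refine ⟨∑ μ ∈ c.support, C μ, fun t ht => ?_⟩
  have hentry : (exp ((t : ℂ) • Ac) *ᵥ Pi.single j 1) i = exp (t • A) i j := by
    have hAc : (t : ℂ) • Ac = (t • A).map (↑) := by
      ext
      simp [Ac]
    rw [mulVec_single_one, hAc, ← map_ofReal_exp]
    rfl
  calc |exp (t • A) i j| = ‖(exp ((t : ℂ) • Ac) *ᵥ Pi.single j 1) i‖ := by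
        rw [hentry, Complex.norm_real, Real.norm_eq_abs]
    _ ≤ ‖exp ((t : ℂ) • Ac) *ᵥ Pi.single j 1‖ := norm_le_pi_norm _ i
    _ ≤ ∑ μ ∈ c.support, ‖exp ((t : ℂ) • Ac) *ᵥ c μ‖ := by
        rw [← hsum, Finsupp.sum, mulVec_sum]
        exact norm_sum_le _ _
    _ ≤ ∑ μ ∈ c.support, C μ * Real.exp (t * ρ) := Finset.sum_le_sum fun μ hμ => hC μ hμ t ht
    _ = (∑ μ ∈ c.support, C μ) * Real.exp (t * ρ) := (Finset.sum_mul _ _ _).symm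

theorem lintegral_exp_smul_sub_smul_one_apply_lt_top {A : Matrix V V ℝ} {lam α : ℝ}
    (hspec : ∀ μ, A.IsComplexEigenvalue μ → μ.re ≤ lam) (hα : lam < α) (i j : V) :
    ∫⁻ t in Ioi (0 : ℝ), ENNReal.ofReal (exp (t • (A - α • (1 : Matrix V V ℝ))) i j) < ∞ := by
  obtain ⟨C, hC⟩ := exists_abs_exp_smul_apply_le (ρ := (lam + α) / 2)
    (fun μ hμ => (hspec μ hμ).trans_lt (by linarith)) i j
  have hint : IntegrableOn (fun t => C * Real.exp (-((α - lam) / 2) * t)) (Ioi (0 : ℝ)) :=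
    (exp_neg_integrableOn_Ioi 0 (by linarith)).const_mul C
  refine lt_of_le_of_lt (setLIntegral_mono' measurableSet_Ioi fun t ht => ?_)
    hint.lintegral_lt_top
  refine ENNReal.ofReal_le_ofReal ?_
  rw [smul_sub, smul_smul, exp_sub_smul_one, smul_apply, smul_eq_mul, ← Real.exp_eq_exp_ℝ]
  calc Real.exp (-(t * α)) * exp (t • A) i j
      ≤ Real.exp (-(t * α)) * (C * Real.exp (t * ((lam + α) / 2))) :=
        mul_le_mul_of_nonneg_left ((le_abs_self _).trans (hC t (le_of_lt ht))) (Real.exp_pos _).le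
    _ = C * Real.exp (-((α - lam) / 2) * t) := by
        rw [mul_left_comm, ← Real.exp_add]
        ring_nf

end GrowthBound

section Nonneg

variable [Fintype V] [DecidableEq V]

theorem hasSum_exp_apply (M : Matrix V V ℝ) (i j : V) :
    HasSum (fun n => (n.factorial⁻¹ : ℝ) * (M ^ n) i j) (exp M i j) := by
  simpa [mulVec_single_one] using Pi.hasSum.1 (hasSum_exp_mulVec M (Pi.single j 1)) i

theorem exp_apply_nonneg_of_nonneg {M : Matrix V V ℝ} (hM : ∀ i j, 0 ≤ M i j) (i j : V) :
    0 ≤ exp M i j :=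
  (hasSum_exp_apply M i j).nonneg fun n => mul_nonneg (by positivity) (pow_apply_nonneg hM n i j)

theorem exp_apply_pos_of_pow_apply_pos {M : Matrix V V ℝ} (hM : ∀ i j, 0 ≤ M i j) {n : ℕ}
    {i j : V} (hn : 0 < (M ^ n) i j) : 0 < exp M i j :=
  (mul_pos (by positivity) hn).trans_le <| le_hasSum (hasSum_exp_apply M i j) n
    fun m _ => mul_nonneg (by positivity) (pow_apply_nonneg hM m i j)

theorem exists_pow_apply_pos_of_transGen {M : Matrix V V ℝ} (hM : ∀ i j, 0 ≤ M i j) {i j : V}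
    (h : Relation.TransGen (fun x y => x ≠ y ∧ 0 < M y x) i j) : ∃ n, 0 < (M ^ n) j i := by
  induction h with
  | single h => exact ⟨1, by simpa using h.2⟩
  | tail _ hstep ih =>
      obtain ⟨n, hn⟩ := ih
      refine ⟨n + 1, ?_⟩
      rw [pow_succ', mul_apply]
      exact Finset.sum_pos' (fun k _ => mul_nonneg (hM _ _) (pow_apply_nonneg hM _ _ _))
        ⟨_, Finset.mem_univ _, mul_pos hstep.2 hn⟩

end Nonneg

section Metzler

variable {A : Matrix V V ℝ}

theorem IsMetzler.smul (hA : A.IsMetzler) {t : ℝ} (ht : 0 ≤ t) : (t • A).IsMetzler :=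
  fun σ σ' h => mul_nonneg ht (hA σ σ' h)

variable [DecidableEq V]

theorem IsMetzler.add_smul_one (hA : A.IsMetzler) (r : ℝ) : (A + r • 1).IsMetzler :=
  fun σ σ' h => by simpa [one_apply_ne' h] using hA σ σ' h

theorem IsIrreducibleMetzlerChain.add_smul_one (hA : A.IsIrreducibleMetzlerChain) (r : ℝ) :
    (A + r • 1).IsIrreducibleMetzlerChain := fun σ σ' h =>
  Relation.TransGen.mono (fun x y hxy => ⟨hxy.1, by simpa [one_apply_ne' hxy.1] using hxy.2⟩)
    σ σ' (hA σ σ' h)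

variable [Fintype V]

theorem IsMetzler.exists_nonneg_add_smul_one (hA : A.IsMetzler) :
    ∃ c : ℝ, ∀ i j, 0 ≤ (A + c • 1) i j := by
  refine ⟨∑ k, |A k k|, fun i j => ?_⟩
  rcases eq_or_ne i j with rfl | hij
  · have hle : |A i i| ≤ ∑ k, |A k k| :=
      Finset.single_le_sum (f := fun k => |A k k|) (fun k _ => abs_nonneg _) (Finset.mem_univ i)
    simp only [add_apply, smul_apply, one_apply_eq, smul_eq_mul, mul_one]
    linarith [neg_abs_le (A i i)]
  · simpa [one_apply_ne hij] using hA j i hij.symm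

theorem exp_apply_eq_exp_neg_mul_exp_add_smul_one (A : Matrix V V ℝ) (c : ℝ) (i j : V) :
    exp A i j = Real.exp (-c) * exp (A + c • 1) i j := by
  rw [← smul_eq_mul, ← smul_apply, Real.exp_eq_exp_ℝ, ← exp_sub_smul_one, add_sub_cancel_right]

theorem IsMetzler.exp_apply_nonneg (hA : A.IsMetzler) (i j : V) : 0 ≤ exp A i j := by
  obtain ⟨c, hc⟩ := hA.exists_nonneg_add_smul_one
  rw [exp_apply_eq_exp_neg_mul_exp_add_smul_one A c]
  exact mul_nonneg (Real.exp_pos _).le (exp_apply_nonneg_of_nonneg hc i j)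

theorem IsMetzler.exp_apply_pos (hA : A.IsMetzler) (hirr : A.IsIrreducibleMetzlerChain)
    (i j : V) : 0 < exp A i j := by
  obtain ⟨c, hc⟩ := hA.exists_nonneg_add_smul_one
  rw [exp_apply_eq_exp_neg_mul_exp_add_smul_one A c]
  refine mul_pos (Real.exp_pos _) ?_
  rcases eq_or_ne j i with rfl | hji
  · exact exp_apply_pos_of_pow_apply_pos hc (n := 0) (by simp)
  · obtain ⟨n, hn⟩ := exists_pow_apply_pos_of_transGen hc (hirr.add_smul_one c j i hji)
    exact exp_apply_pos_of_pow_apply_pos hc hn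

end Metzler

section Divergence

variable [Fintype V]

theorem abs_le_sum_apply_of_mulVec_eq_smul {E : Matrix V V ℝ} (hE : ∀ i j, 0 ≤ E i j)
    {v : V → ℝ} {r : ℝ} (hv : E *ᵥ v = r • v) {k : V} (hk : ∀ j, |v j| ≤ |v k|)
    (hk0 : v k ≠ 0) : |r| ≤ ∑ j, E k j := by
  refine le_of_mul_le_mul_right ?_ (abs_pos.2 hk0)
  calc |r| * |v k| = |∑ j, E k j * v j| := by
        rw [← abs_mul, ← smul_eq_mul, ← Pi.smul_apply, ← hv]
        rfl
    _ ≤ ∑ j, |E k j * v j| := Finset.abs_sum_le_sum_abs _ _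
    _ ≤ ∑ j, E k j * |v k| := Finset.sum_le_sum fun j _ => by
        rw [abs_mul, abs_of_nonneg (hE k j)]
        exact mul_le_mul_of_nonneg_left (hk j) (hE k j)
    _ = (∑ j, E k j) * |v k| := (Finset.sum_mul _ _ _).symm

theorem mul_sum_le_mul_mul_apply {P E Q : Matrix V V ℝ} {δ : ℝ} (hδ : 0 ≤ δ)
    (hP : ∀ i j, δ ≤ P i j) (hE : ∀ i j, 0 ≤ E i j) (hQ : ∀ i j, δ ≤ Q i j) (i j k : V) :
    δ * δ * ∑ l, E k l ≤ (P * E * Q) i j := by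
  have hPE : ∀ l, δ * E k l ≤ (P * E) i l := fun l =>
    (mul_le_mul_of_nonneg_right (hP i k) (hE k l)).trans <|
      Finset.single_le_sum (f := fun m => P i m * E m l)
        (fun m _ => mul_nonneg (hδ.trans (hP i m)) (hE m l)) (Finset.mem_univ k)
  calc δ * δ * ∑ l, E k l = ∑ l, δ * E k l * δ := by
        rw [Finset.mul_sum]
        exact Finset.sum_congr rfl fun l _ => by ring
    _ ≤ ∑ l, (P * E) i l * Q l j := Finset.sum_le_sum fun l _ =>
        mul_le_mul (hPE l) (hQ l j) hδ (mul_nonneg hδ (hE k l) |>.trans (hPE l))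
    _ = (P * E * Q) i j := (mul_apply ..).symm

variable [DecidableEq V] {B : Matrix V V ℝ}

theorem IsMetzler.exists_pos_le_exp_smul_apply (hB : B.IsMetzler)
    (hirr : B.IsIrreducibleMetzlerChain) {v : V → ℝ} {r : ℝ} (hv : B *ᵥ v = r • v) (hv0 : v ≠ 0)
    (hr : 0 ≤ r) (i j : V) : ∃ c > 0, ∀ t : ℝ, 2 < t → c ≤ exp (t • B) i j := by
  have : Nonempty V := ⟨i⟩
  obtain ⟨k, hk⟩ := Finite.exists_max fun l => |v l|
  have hk0 : v k ≠ 0 := fun h => hv0 <| funext fun l => abs_nonpos_iff.1 <| by simpa [h] using hk l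
  obtain ⟨⟨p, q⟩, hpq⟩ := Finite.exists_min fun x : V × V => exp B x.1 x.2
  have hδ := hB.exp_apply_pos hirr p q
  refine ⟨exp B p q * exp B p q, by positivity, fun t ht => ?_⟩
  have hsplit : exp (t • B) = exp B * exp ((t - 2) • B) * exp B := by
    rw [← exp_add_of_commute _ _ ((Commute.refl B).smul_right _),
      ← exp_add_of_commute _ _ (((Commute.refl B).add_left ((Commute.refl B).smul_left _)))]
    congr 1
    module
  have hE := (hB.smul (by linarith : (0 : ℝ) ≤ t - 2)).exp_apply_nonneg
  have heig : exp ((t - 2) • B) *ᵥ v = Real.exp ((t - 2) * r) • v := by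
    rw [Real.exp_eq_exp_ℝ, exp_mulVec_of_mulVec_eq_smul _ (by rw [smul_mulVec, hv, smul_smul])]
  have hrow := abs_le_sum_apply_of_mulVec_eq_smul hE heig hk hk0
  have hgrowth : 1 ≤ |Real.exp ((t - 2) * r)| := by
    rw [abs_of_pos (Real.exp_pos _)]
    exact Real.one_le_exp (mul_nonneg (by linarith) hr)
  calc exp B p q * exp B p q ≤ exp B p q * exp B p q * |Real.exp ((t - 2) * r)| :=
        le_mul_of_one_le_right (by positivity) hgrowth
    _ ≤ exp B p q * exp B p q * ∑ l, exp ((t - 2) • B) k l :=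
        mul_le_mul_of_nonneg_left hrow (by positivity)
    _ ≤ exp (t • B) i j := by
        rw [hsplit]
        exact mul_sum_le_mul_mul_apply (by positivity) (fun a b => hpq (a, b)) hE
          (fun a b => hpq (a, b)) i j k

end Divergence

end Matrix

theorem resolvent_divergence_criterion_general {V : Type*} [Fintype V] [DecidableEq V]
    (A : Matrix V V ℝ) (lam : ℝ)
    (hMetzler : A.IsMetzler) (hirr : A.IsIrreducibleMetzlerChain)
    (hPerron : A.IsPerronRoot lam) :
    ∀ (α : ℝ) (σ σ' : V),
      (∫⁻ t in Set.Ioi (0 : ℝ),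
          ENNReal.ofReal ((NormedSpace.exp (t • (A - α • (1 : Matrix V V ℝ)))) σ' σ)) = ∞
        ↔ α ≤ lam := by
  intro α σ σ'
  constructor
  · intro hdiv
    by_contra! hlt
    exact (Matrix.lintegral_exp_smul_sub_smul_one_apply_lt_top hPerron.2 hlt σ' σ).ne hdiv
  · intro hle
    obtain ⟨v, hv0, hv⟩ := hPerron.1
    have hshift : A - α • (1 : Matrix V V ℝ) = A + (-α) • 1 := by
      rw [neg_smul, sub_eq_add_neg]
    have heig : (A + (-α) • 1) *ᵥ v = (lam - α) • v := by
      rw [Matrix.add_mulVec, Matrix.smul_mulVec, Matrix.one_mulVec, hv, sub_eq_add_neg, add_smul]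
    obtain ⟨c, hc, hbound⟩ := (hMetzler.add_smul_one (-α)).exists_pos_le_exp_smul_apply
      (hirr.add_smul_one (-α)) heig hv0 (sub_nonneg.2 hle) σ' σ
    rw [hshift]
    exact lintegral_Ioi_ofReal_eq_top_of_le hc zero_le_two hbound

/-- **Resolvent divergence criterion for the Lyapunov exponent.** For an
irreducible Metzler matrix `A` with Perron root `lam`, the entrywise integral
`∫₀^∞ (exp (t (A − α)))_{σ',σ} dt` diverges if and only if `α ≤ lam`, for every
`α` and every pair of indices. -/
theorem resolvent_divergence_criterion {V : Type*} [Fintype V] [DecidableEq V] [Nonempty V]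
    (A : Matrix V V ℝ) (lam : ℝ)
    (hMetzler : A.IsMetzler) (hirr : A.IsIrreducibleMetzlerChain)
    (hPerron : A.IsPerronRoot lam) :
    ∀ (α : ℝ) (σ σ' : V),
      (∫⁻ t in Set.Ioi (0 : ℝ),
          ENNReal.ofReal ((NormedSpace.exp (t • (A - α • (1 : Matrix V V ℝ)))) σ' σ)) = ∞
        ↔ α ≤ lam :=
  resolvent_divergence_criterion_general A lam hMetzler hirr hPerron
end

section
/- Structure of the excursion-weight function: Let V be a finite index set with at least 2 elements and A an irreducible Metzler real matrix indexed by V with A_{σ,σ} ≤ 0 for all σ. Fix σ ∈ V and define F : (0,∞) → [0,∞] by F(α) := f(α)_{σ→σ}, the tsum over all excursions σ = σ₁, …, σ_ℓ = σ (ℓ ≥ 2, σ_i ≠ σ for 1 < i < ℓ) of ∏_{i=1}^{ℓ−1} A_{σ_{i+1},σ_i}/(α − A_{σ_i,σ_i}). Then: (i) F is antitone on (0,∞); (ii) there exists α₀ ∈ [0,∞] such that for every α > 0, F(α) = ∞ if and only if α ≤ α₀; (iii) on the set {α > 0 : F(α) < ∞}, F is real-valued, strictly decreasing, and continuous. -/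
open scoped ENNReal

/-- The weight of a finite path, as the product (in `[0,∞]`) of the
`ENNReal.ofReal`-weights of its consecutive pairs. The empty product is `1`. -/
noncomputable def pathWeight {V : Type*} (w : V → V → ℝ) : List V → ℝ≥0∞
  | [] => 1
  | [_] => 1
  | a :: b :: l => ENNReal.ofReal (w a b) * pathWeight w (b :: l)

/-- `l` is an excursion from `σ` to `σ`: a walk of length `≥ 2` starting and
ending at `σ` whose intermediate vertices are all different from `σ`. -/
def IsExcursion {V : Type*} (σ : V) (l : List V) : Prop :=
  2 ≤ l.length ∧ l.head? = some σ ∧ l.getLast? = some σ ∧ ∀ x ∈ l.tail.dropLast, x ≠ σ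

/-- The total weight `f(α)_{σ→σ}` of all excursions from `σ` to `σ`, with
transition weights `w(α)_{x→y} = A_{y,x}/(α − A_{x,x})`. -/
noncomputable def excursionWeight {V : Type*} (A : Matrix V V ℝ) (α : ℝ) (σ : V) : ℝ≥0∞ :=
  ∑' l : {l : List V // IsExcursion σ l},
    pathWeight (fun x y => A y x / (α - A x x)) l.1

/-!
Write `M` for the matrix of transition weights `w(α)` with the column of `σ` set to zero and `W`
for the full one. Excursions with `n` interior vertices contribute `(Mⁿ W)_{σσ}`, so
`F(α) = ∑ₙ (Mⁿ W)_{σσ}`. All weights are antitone in `α`, which gives (i). For `0 < β ≤ α`,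
`w(β) ≤ (α/β) w(α)` and `w(β) ≥ ((α - d)/(β - d)) w(α)` with `d = min_x A_{x,x}`. The lower bound,
together with `F > 0` (irreducibility), gives strict decrease. The upper bound shows that
`{F < ∞}` is open: by irreducibility every entry of `∑ₙ Mⁿ` is finite when `F(α) < ∞`, so the
entry sums of `Mⁿ`, being submultiplicative and summable, decay geometrically and `∑ₙ rⁿ Mⁿ`
converges for some `r > 1`. Openness yields the threshold `α₀` of (ii), and continuity follows by
dominated convergence, dominating `F` near `α` by a finite `F(β)`, `β < α`.
-/

open scoped NNReal
open Filter Topology Relation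

section Matrix

variable {ι : Type*} [Fintype ι]

lemma Matrix.apply_mul_apply_le_mul_apply {l m n α : Type*} [Fintype m]
    [NonUnitalNonAssocSemiring α] [PartialOrder α] [CanonicallyOrderedAdd α] [IsOrderedAddMonoid α]
    (P : Matrix l m α) (Q : Matrix m n α) (i : l) (k : m) (j : n) :
    P i k * Q k j ≤ (P * Q) i j :=
  Finset.single_le_sum (f := fun k => P i k * Q k j) (fun _ _ => zero_le) (Finset.mem_univ k)

lemma Matrix.sum_sum_mul_apply_le (P Q : Matrix ι ι ℝ≥0∞) :
    ∑ i, ∑ j, (P * Q) i j ≤ (∑ i, ∑ j, P i j) * ∑ i, ∑ j, Q i j := by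
  calc ∑ i, ∑ j, (P * Q) i j = ∑ i, ∑ k, P i k * ∑ j, Q k j := by
        simp only [Matrix.mul_apply, Finset.mul_sum]
        exact Finset.sum_congr rfl fun i _ => Finset.sum_comm
    _ ≤ ∑ i, ∑ k, P i k * ∑ i', ∑ j, Q i' j := by
        refine Finset.sum_le_sum fun i _ => Finset.sum_le_sum fun k _ => mul_le_mul' le_rfl ?_
        exact Finset.single_le_sum (f := fun k => ∑ j, Q k j) (fun _ _ => zero_le)
          (Finset.mem_univ k)
    _ = (∑ i, ∑ j, P i j) * ∑ i, ∑ j, Q i j := by simp only [Finset.sum_mul]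

theorem ENNReal.exists_one_lt_tsum_pow_mul_ne_top {s : ℕ → ℝ≥0∞}
    (hmul : ∀ m n, s (m + n) ≤ s m * s n) (hs : ∑' n, s n ≠ ∞) :
    ∃ r : ℝ≥0, 1 < r ∧ ∑' n, (r : ℝ≥0∞) ^ n * s n ≠ ∞ := by
  -- Once `s p < 2⁻¹`, submultiplicativity gives `s (k * p + j) ≤ 2⁻ᵏ * s j`, and any `r` with
  -- `r ^ p < 2` keeps the weighted series dominated by a geometric one.
  obtain ⟨p, hp, hsp⟩ : ∃ p, 0 < p ∧ s p < 2⁻¹ :=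
    ((eventually_gt_atTop 0).and ((ENNReal.tendsto_atTop_zero_of_tsum_ne_top hs).eventually
      (gt_mem_nhds (by norm_num)))).exists
  have hpow : ∀ᶠ r in 𝓝[>] (1 : ℝ≥0), r ^ p < 2 :=
    (((continuous_pow p).tendsto' 1 1 (one_pow p)).eventually
      (gt_mem_nhds (by norm_num : (1 : ℝ≥0) < 2))).filter_mono nhdsWithin_le_nhds
  obtain ⟨r, hrp, hr⟩ := (hpow.and (self_mem_nhdsWithin : Set.Ioi (1 : ℝ≥0) ∈ 𝓝[>] 1)).exists
  refine ⟨r, hr, ?_⟩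
  set q := (r : ℝ≥0∞) ^ p * s p
  have hq : q < 1 := by
    calc q < 2 * 2⁻¹ := ENNReal.mul_lt_mul (by exact_mod_cast hrp) hsp
      _ = 1 := ENNReal.mul_inv_cancel two_ne_zero ENNReal.ofNat_ne_top
  have hdecay (k j : ℕ) : (r : ℝ≥0∞) ^ (k * p + j) * s (k * p + j) ≤ q ^ k * (r ^ j * s j) := by
    induction k with
    | zero => simp
    | succ k ih =>
      calc (r : ℝ≥0∞) ^ ((k + 1) * p + j) * s ((k + 1) * p + j)
          = r ^ p * r ^ (k * p + j) * s (p + (k * p + j)) := by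
            rw [← pow_add]; congr 2 <;> ring
        _ ≤ r ^ p * r ^ (k * p + j) * (s p * s (k * p + j)) := by gcongr; exact hmul _ _
        _ = q * (r ^ (k * p + j) * s (k * p + j)) := by ring
        _ ≤ q * (q ^ k * (r ^ j * s j)) := by gcongr
        _ = q ^ (k + 1) * (r ^ j * s j) := by ring
  have : NeZero p := ⟨hp.ne'⟩
  rw [← (Nat.divModEquiv p).symm.tsum_eq, ENNReal.tsum_prod']
  refine ne_top_of_le_ne_top ?_
    (ENNReal.tsum_le_tsum fun k => ENNReal.tsum_le_tsum fun j => hdecay k j)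
  simp only [tsum_fintype, ← Finset.mul_sum]
  rw [ENNReal.tsum_mul_right, ENNReal.tsum_geometric]
  exact ENNReal.mul_ne_top (ENNReal.inv_ne_top.2 (tsub_pos_of_lt hq).ne')
    (ENNReal.sum_ne_top.2 fun j _ => ENNReal.mul_ne_top (by simp)
      (ne_top_of_le_ne_top hs (ENNReal.le_tsum _)))

variable [DecidableEq ι] in
theorem Matrix.exists_one_lt_tsum_pow_mul_pow_apply_ne_top {M : Matrix ι ι ℝ≥0∞}
    (h : ∀ i j, ∑' n, (M ^ n) i j ≠ ∞) :
    ∃ r : ℝ≥0, 1 < r ∧ ∀ i j, ∑' n, (r : ℝ≥0∞) ^ n * (M ^ n) i j ≠ ∞ := by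
  have hs : ∑' n, ∑ i, ∑ j, (M ^ n) i j ≠ ∞ := by
    simp only [Summable.tsum_finsetSum fun _ _ => ENNReal.summable]
    exact ENNReal.sum_ne_top.2 fun i _ => ENNReal.sum_ne_top.2 fun j _ => h i j
  obtain ⟨r, hr, hsum⟩ := ENNReal.exists_one_lt_tsum_pow_mul_ne_top
    (fun m n => by simpa only [pow_add] using Matrix.sum_sum_mul_apply_le _ _) hs
  refine ⟨r, hr, fun i j => ne_top_of_le_ne_top hsum (ENNReal.tsum_le_tsum fun n => ?_)⟩
  gcongr
  exact (Finset.single_le_sum (f := fun j => (M ^ n) i j) (fun _ _ => zero_le)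
    (Finset.mem_univ j)).trans (Finset.single_le_sum (f := fun i => ∑ j, (M ^ n) i j)
      (fun _ _ => zero_le) (Finset.mem_univ i))

end Matrix

section Walks

variable {V : Type*}

noncomputable def walkWeight (ω : V → V → ℝ≥0∞) : List V → ℝ≥0∞
  | [] => 1
  | [_] => 1
  | a :: b :: l => ω a b * walkWeight ω (b :: l)

variable {σ : V} {ω ω' : V → V → ℝ≥0∞}

@[simp] lemma walkWeight_nil : walkWeight ω [] = 1 := rfl

@[simp] lemma walkWeight_singleton (a : V) : walkWeight ω [a] = 1 := rfl

@[simp] lemma walkWeight_cons_cons (a b : V) (l : List V) :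
    walkWeight ω (a :: b :: l) = ω a b * walkWeight ω (b :: l) := rfl

lemma pathWeight_eq_walkWeight (w : V → V → ℝ) (l : List V) :
    pathWeight w l = walkWeight (fun a b => ENNReal.ofReal (w a b)) l := by
  induction l using walkWeight.induct with
  | case1 | case2 => rfl
  | case3 a b l ih => rw [pathWeight, walkWeight_cons_cons, ih]

lemma walkWeight_mono (h : ω ≤ ω') (l : List V) : walkWeight ω l ≤ walkWeight ω' l := by
  induction l using walkWeight.induct with
  | case1 | case2 => rfl
  | case3 a b l ih => exact mul_le_mul' (h a b) ih

lemma walkWeight_const_mul (c : ℝ≥0∞) (l : List V) :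
    walkWeight (fun a b => c * ω a b) l = c ^ (l.length - 1) * walkWeight ω l := by
  induction l using walkWeight.induct with
  | case1 | case2 => simp
  | case3 a b l ih =>
    simp only [walkWeight_cons_cons, ih, List.length_cons, Nat.add_sub_cancel, pow_succ]
    ring

lemma continuousOn_toReal_walkWeight {X : Type*} [TopologicalSpace X] {ω : X → V → V → ℝ≥0∞}
    {U : Set X} (h : ∀ a b, ContinuousOn (fun x => (ω x a b).toReal) U) (l : List V) :
    ContinuousOn (fun x => (walkWeight (ω x) l).toReal) U := by
  induction l using walkWeight.induct with
  | case1 | case2 => exact continuousOn_const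
  | case3 a b l ih =>
    simp only [walkWeight_cons_cons, ENNReal.toReal_mul]
    exact (h a b).mul ih

noncomputable def excursionSum (σ : V) (ω : V → V → ℝ≥0∞) : ℝ≥0∞ :=
  ∑' l : {l : List V // IsExcursion σ l}, walkWeight ω l

lemma excursionSum_mono (h : ω ≤ ω') : excursionSum σ ω ≤ excursionSum σ ω' :=
  ENNReal.tsum_le_tsum fun l => walkWeight_mono h l

lemma mul_excursionSum_le {c : ℝ≥0∞} (hc : 1 ≤ c) :
    c * excursionSum σ ω ≤ excursionSum σ (fun a b => c * ω a b) := by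
  rw [excursionSum, ← ENNReal.tsum_mul_left]
  refine ENNReal.tsum_le_tsum fun l => ?_
  rw [walkWeight_const_mul]
  gcongr
  exact le_self_pow₀ hc (by have := l.2.1; omega)

lemma continuousOn_toReal_excursionSum {X : Type*} [TopologicalSpace X]
    {ω : X → V → V → ℝ≥0∞} {ω₀ : V → V → ℝ≥0∞} {U : Set X}
    (hcont : ∀ a b, ContinuousOn (fun x => (ω x a b).toReal) U) (hle : ∀ x ∈ U, ω x ≤ ω₀)
    (hfin : excursionSum σ ω₀ ≠ ∞) :
    ContinuousOn (fun x => (excursionSum σ (ω x)).toReal) U := by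
  have hfin' (l : {l : List V // IsExcursion σ l}) : walkWeight ω₀ l ≠ ∞ :=
    ne_top_of_le_ne_top hfin (ENNReal.le_tsum l)
  have hsum : Summable fun l : {l : List V // IsExcursion σ l} => (walkWeight ω₀ l).toReal :=
    ENNReal.summable_toReal hfin
  refine (continuousOn_tsum (fun l : {l : List V // IsExcursion σ l} =>
    continuousOn_toReal_walkWeight hcont l.1) hsum
    fun l x hx => ?_).congr fun x hx => ?_
  · rw [Real.norm_of_nonneg ENNReal.toReal_nonneg]
    exact ENNReal.toReal_mono (hfin' l) (walkWeight_mono (hle x hx) l)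
  · exact ENNReal.tsum_toReal_eq fun l =>
      ne_top_of_le_ne_top (hfin' l) (walkWeight_mono (hle x hx) l)

lemma isExcursion_iff {l : List V} :
    IsExcursion σ l ↔ ∃ t : List V, (∀ x ∈ t, x ≠ σ) ∧ l = σ :: t ++ [σ] := by
  constructor
  · rintro ⟨hlen, hhead, hlast, hmid⟩
    obtain ⟨ys, rfl⟩ := List.head?_eq_some_iff.1 hhead
    obtain ⟨y, ys, rfl⟩ := List.exists_cons_of_ne_nil (l := ys) (by rintro rfl; simp at hlen)
    rw [List.getLast?_cons_cons, List.getLast?_eq_some_iff] at hlast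
    obtain ⟨t, ht⟩ := hlast
    exact ⟨t, by simpa [ht] using hmid, by rw [ht]; rfl⟩
  · rintro ⟨t, ht, rfl⟩
    exact ⟨by simp, by simp, by rw [List.getLast?_concat], by simpa using ht⟩

noncomputable def interiorEquiv (σ : V) :
    List {x // x ≠ σ} ≃ {l : List V // IsExcursion σ l} :=
  Equiv.ofBijective
    (fun m => ⟨σ :: m.unattach ++ [σ],
      isExcursion_iff.2 ⟨_, fun _ hx => (List.mem_unattach.1 hx).1, rfl⟩⟩)
    ⟨fun m m' h => List.map_injective_iff.2 Subtype.val_injective (by simpa using h),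
      fun ⟨l, hl⟩ => by
        obtain ⟨t, ht, rfl⟩ := isExcursion_iff.1 hl
        exact ⟨t.attachWith _ ht, by simp⟩⟩

lemma excursionSum_eq_tsum_interior (σ : V) (ω : V → V → ℝ≥0∞) :
    excursionSum σ ω = ∑' m : List {x // x ≠ σ}, walkWeight ω (σ :: m.unattach ++ [σ]) :=
  ((interiorEquiv σ).tsum_eq fun l => walkWeight ω l.1).symm

end Walks

section AvoidingMatrix

variable {V : Type*} [DecidableEq V] {σ : V} {ω : V → V → ℝ≥0∞}

/-- The transition matrix of walks that never enter `σ`. -/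
def avoidingMatrix (σ : V) (ω : V → V → ℝ≥0∞) : Matrix V V ℝ≥0∞ :=
  Matrix.of fun x y => if y = σ then 0 else ω x y

lemma avoidingMatrix_const_mul (c : ℝ≥0∞) :
    avoidingMatrix σ (fun a b => c * ω a b) = c • avoidingMatrix σ ω := by
  ext x y
  by_cases hy : y = σ <;> simp [avoidingMatrix, hy]

variable [Fintype V]

lemma sum_walkWeight_ofFn (σ : V) (ω : V → V → ℝ≥0∞) (n : ℕ) (x y : V) :
    ∑ f : Fin n → {z // z ≠ σ}, walkWeight ω (x :: (List.ofFn f).unattach ++ [y]) =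
      (avoidingMatrix σ ω ^ n * Matrix.of ω) x y := by
  induction n generalizing x with
  | zero => simp
  | succ n ih =>
    rw [← (Fin.consEquiv fun _ => {z // z ≠ σ}).sum_comp, Fintype.sum_prod_type, pow_succ',
      mul_assoc, Matrix.mul_apply,
      ← Finset.sum_erase Finset.univ (a := σ) (by simp [avoidingMatrix]),
      Finset.sum_subtype (p := (· ≠ σ)) (F := inferInstance) _ (by simp)]
    refine Finset.sum_congr rfl fun z _ => ?_
    simp only [List.cons_append] at ih ⊢
    simp [Fin.consEquiv, List.ofFn_succ, ← Finset.mul_sum, ih, avoidingMatrix, z.2]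

lemma excursionSum_eq_tsum_pow_mul_apply (σ : V) (ω : V → V → ℝ≥0∞) :
    excursionSum σ ω = ∑' n, (avoidingMatrix σ ω ^ n * Matrix.of ω) σ σ := by
  rw [excursionSum_eq_tsum_interior, ← List.equivSigmaTuple.symm.tsum_eq, ENNReal.tsum_sigma']
  exact tsum_congr fun n => (tsum_fintype _).trans (sum_walkWeight_ofFn σ ω n σ σ)

lemma exists_pow_avoidingMatrix_apply_pos {x : V}
    (h : ReflTransGen (fun a b => 0 < ω a b) σ x) :
    ∃ k, 0 < (avoidingMatrix σ ω ^ k) σ x := by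
  induction h with
  | refl => exact ⟨0, by simp⟩
  | @tail b c _ hbc ih =>
    obtain ⟨k, hk⟩ := ih
    rcases eq_or_ne c σ with rfl | hc
    · exact ⟨0, by simp⟩
    · refine ⟨k + 1, ?_⟩
      calc 0 < (avoidingMatrix σ ω ^ k) σ b * avoidingMatrix σ ω b c := by
            simpa [avoidingMatrix, hc] using ENNReal.mul_pos hk.ne' hbc.ne'
        _ ≤ _ := by rw [pow_succ]; exact Matrix.apply_mul_apply_le_mul_apply _ _ _ _ _

lemma exists_pow_avoidingMatrix_mul_apply_pos {x : V}
    (h : ReflTransGen (fun a b => 0 < ω a b) x σ) (hx : x ≠ σ) :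
    ∃ k, 0 < (avoidingMatrix σ ω ^ k * Matrix.of ω) x σ := by
  induction h using Relation.ReflTransGen.head_induction_on with
  | refl => exact absurd rfl hx
  | @head a b hab _ ih =>
    rcases eq_or_ne b σ with rfl | hb
    · exact ⟨0, by simpa using hab⟩
    · obtain ⟨k, hk⟩ := ih hb
      refine ⟨k + 1, ?_⟩
      calc 0 < avoidingMatrix σ ω a b * (avoidingMatrix σ ω ^ k * Matrix.of ω) b σ := by
            simpa [avoidingMatrix, hb] using ENNReal.mul_pos hab.ne' hk.ne'
        _ ≤ _ := by rw [pow_succ', mul_assoc]; exact Matrix.apply_mul_apply_le_mul_apply _ _ _ _ _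

lemma excursionSum_pos {τ : V} (hτ : τ ≠ σ) (hto : ReflTransGen (fun a b => 0 < ω a b) σ τ)
    (hfrom : ReflTransGen (fun a b => 0 < ω a b) τ σ) : 0 < excursionSum σ ω := by
  obtain ⟨a, ha⟩ := exists_pow_avoidingMatrix_apply_pos hto
  obtain ⟨b, hb⟩ := exists_pow_avoidingMatrix_mul_apply_pos hfrom hτ
  rw [excursionSum_eq_tsum_pow_mul_apply]
  calc 0 < (avoidingMatrix σ ω ^ a) σ τ * (avoidingMatrix σ ω ^ b * Matrix.of ω) τ σ :=
        ENNReal.mul_pos ha.ne' hb.ne'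
    _ ≤ (avoidingMatrix σ ω ^ (a + b) * Matrix.of ω) σ σ := by
        rw [pow_add, mul_assoc]
        exact Matrix.apply_mul_apply_le_mul_apply _ _ _ _ _
    _ ≤ ∑' n, (avoidingMatrix σ ω ^ n * Matrix.of ω) σ σ := ENNReal.le_tsum _

lemma pow_succ_avoidingMatrix_apply_self (n : ℕ) (x : V) :
    (avoidingMatrix σ ω ^ (n + 1)) x σ = 0 := by
  simp [pow_succ, Matrix.mul_apply, avoidingMatrix]

lemma tsum_pow_avoidingMatrix_apply_ne_top {x y : V}
    (hx : ReflTransGen (fun a b => 0 < ω a b) σ x) (hy : ReflTransGen (fun a b => 0 < ω a b) y σ)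
    (hfin : excursionSum σ ω ≠ ∞) :
    ∑' n, (avoidingMatrix σ ω ^ n) x y ≠ ∞ := by
  rcases eq_or_ne y σ with rfl | hyσ
  · rw [tsum_eq_single 0 fun n hn => by
      obtain ⟨m, rfl⟩ := Nat.exists_eq_succ_of_ne_zero hn
      exact pow_succ_avoidingMatrix_apply_self m x]
    rw [pow_zero, Matrix.one_apply]
    split_ifs <;> simp
  obtain ⟨a, ha⟩ := exists_pow_avoidingMatrix_apply_pos hx
  obtain ⟨b, hb⟩ := exists_pow_avoidingMatrix_mul_apply_pos hy hyσ
  set M := avoidingMatrix σ ω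
  -- Prefixing a walk `σ ⇝ x` and appending a walk `y ⇝ σ` turns walks `x ⇝ y` into excursions.
  have hle : (M ^ a) σ x * (∑' n, (M ^ n) x y) * (M ^ b * Matrix.of ω) y σ ≤ excursionSum σ ω := by
    rw [← ENNReal.tsum_mul_left, ← ENNReal.tsum_mul_right, excursionSum_eq_tsum_pow_mul_apply]
    calc ∑' n, (M ^ a) σ x * (M ^ n) x y * (M ^ b * Matrix.of ω) y σ
        ≤ ∑' n, (M ^ (a + n + b) * Matrix.of ω) σ σ := ENNReal.tsum_le_tsum fun n =>
          calc (M ^ a) σ x * (M ^ n) x y * (M ^ b * Matrix.of ω) y σ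
              = (M ^ a) σ x * ((M ^ n) x y * (M ^ b * Matrix.of ω) y σ) := mul_assoc _ _ _
            _ ≤ (M ^ a) σ x * (M ^ n * (M ^ b * Matrix.of ω)) x σ := by
                gcongr; exact Matrix.apply_mul_apply_le_mul_apply _ _ _ _ _
            _ ≤ (M ^ a * (M ^ n * (M ^ b * Matrix.of ω))) σ σ :=
                Matrix.apply_mul_apply_le_mul_apply _ _ _ _ _
            _ = (M ^ (a + n + b) * Matrix.of ω) σ σ := by simp only [pow_add, mul_assoc]
      _ ≤ ∑' n, (M ^ n * Matrix.of ω) σ σ :=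
          ENNReal.tsum_comp_le_tsum_of_injective
            ((add_left_injective b).comp (add_right_injective a)) _
  intro htop
  rw [htop, ENNReal.mul_top ha.ne', ENNReal.top_mul hb.ne'] at hle
  exact hfin (top_le_iff.1 hle)

theorem exists_one_lt_excursionSum_const_mul_ne_top (hω : ∀ a b, ω a b ≠ ∞)
    (hreach : ∀ x y, ReflTransGen (fun a b => 0 < ω a b) x y) (hfin : excursionSum σ ω ≠ ∞) :
    ∃ r : ℝ≥0, 1 < r ∧ excursionSum σ (fun a b => r * ω a b) ≠ ∞ := by
  obtain ⟨r, hr, hsum⟩ := Matrix.exists_one_lt_tsum_pow_mul_pow_apply_ne_top fun x y =>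
    tsum_pow_avoidingMatrix_apply_ne_top (hreach σ x) (hreach y σ) hfin
  refine ⟨r, hr, ?_⟩
  have hof : Matrix.of (fun a b => (r : ℝ≥0∞) * ω a b) = (r : ℝ≥0∞) • Matrix.of ω := rfl
  rw [excursionSum_eq_tsum_pow_mul_apply, avoidingMatrix_const_mul, hof]
  calc ∑' n, (((r : ℝ≥0∞) • avoidingMatrix σ ω) ^ n * ((r : ℝ≥0∞) • Matrix.of ω)) σ σ
      = r * ∑ k, (∑' n, (r : ℝ≥0∞) ^ n * (avoidingMatrix σ ω ^ n) σ k) * ω k σ := by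
        simp only [smul_pow, Matrix.smul_apply, Matrix.mul_apply,
          Matrix.of_apply, smul_eq_mul]
        rw [Summable.tsum_finsetSum fun _ _ => ENNReal.summable, Finset.mul_sum]
        refine Finset.sum_congr rfl fun k _ => ?_
        rw [← ENNReal.tsum_mul_right, ← ENNReal.tsum_mul_left]
        exact tsum_congr fun n => by ring
    _ ≠ ∞ := ENNReal.mul_ne_top ENNReal.coe_ne_top
        (ENNReal.sum_ne_top.2 fun k _ => ENNReal.mul_ne_top (hsum σ k) (hω k σ))

end AvoidingMatrix

lemma IsUpperSet.exists_notMem_iff_ofReal_le {S : Set ℝ} (hS : IsUpperSet S)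
    (hopen : ∀ α ∈ S, ∃ β ∈ S, β < α) :
    ∃ α₀ : ℝ≥0∞, ∀ α, 0 < α → (α ∉ S ↔ ENNReal.ofReal α ≤ α₀) := by
  refine ⟨⨅ β ∈ S, ENNReal.ofReal β, fun α hα => ⟨fun hαS => ?_, fun hle hαS => ?_⟩⟩
  · exact le_iInf₂ fun β hβ => ENNReal.ofReal_le_ofReal (not_le.1 fun hβα => hαS (hS hβα hβ)).le
  · obtain ⟨β, hβ, hβα⟩ := hopen α hαS
    exact (hle.trans (iInf₂_le β hβ)).not_gt ((ENNReal.ofReal_lt_ofReal_iff hα).2 hβα)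

section Transition

variable {V : Type*} {A : Matrix V V ℝ} {α β γ : ℝ}

/-- `ofReal` sends the nonpositive diagonal weights to `0`, which makes every weight antitone
in `α`. -/
noncomputable def transitionWeight (A : Matrix V V ℝ) (α : ℝ) (x y : V) : ℝ≥0∞ :=
  ENNReal.ofReal (A y x / (α - A x x))

lemma excursionWeight_eq_excursionSum (A : Matrix V V ℝ) (α : ℝ) (σ : V) :
    excursionWeight A α σ = excursionSum σ (transitionWeight A α) :=
  tsum_congr fun l => pathWeight_eq_walkWeight _ l.1

lemma transitionWeight_self {x : V} (hx : A x x ≤ 0) (hα : 0 < α) : transitionWeight A α x x = 0 :=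
  ENNReal.ofReal_eq_zero.2 (div_nonpos_of_nonpos_of_nonneg hx (by linarith))

lemma transitionWeight_antitone (hM : A.IsMetzler) (hdiag : ∀ x, A x x ≤ 0) (hβ : 0 < β)
    (hβγ : β ≤ γ) : transitionWeight A γ ≤ transitionWeight A β := by
  intro x y
  rcases eq_or_ne x y with rfl | hxy
  · simp [transitionWeight_self (hdiag x) (hβ.trans_le hβγ)]
  · exact ENNReal.ofReal_le_ofReal
      (div_le_div_of_nonneg_left (hM x y hxy) (by linarith [hdiag x]) (by linarith))

lemma transitionWeight_le_mul (hM : A.IsMetzler) (hdiag : ∀ x, A x x ≤ 0) (hβ : 0 < β)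
    (hβγ : β ≤ γ) :
    transitionWeight A β ≤ fun x y => ENNReal.ofReal (γ / β) * transitionWeight A γ x y := by
  intro x y
  rcases eq_or_ne x y with rfl | hxy
  · simp [transitionWeight_self (hdiag x) hβ]
  · have hyx := hM x y hxy
    have hx := hdiag x
    dsimp only [transitionWeight]
    rw [← ENNReal.ofReal_mul (div_nonneg (by linarith) hβ.le)]
    refine ENNReal.ofReal_le_ofReal ?_
    rw [div_mul_div_comm, div_le_div_iff₀ (by linarith) (by nlinarith)]
    nlinarith [mul_nonneg (mul_nonneg hyx (neg_nonneg.2 hx)) (sub_nonneg.2 hβγ)]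

lemma mul_transitionWeight_le (hM : A.IsMetzler) (hdiag : ∀ x, A x x ≤ 0) {d : ℝ}
    (hd : ∀ x, d ≤ A x x) (hβ : 0 < β) (hβγ : β ≤ γ) :
    (fun x y => ENNReal.ofReal ((γ - d) / (β - d)) * transitionWeight A γ x y) ≤
      transitionWeight A β := by
  intro x y
  rcases eq_or_ne x y with rfl | hxy
  · simp [transitionWeight_self (hdiag x) (hβ.trans_le hβγ)]
  · have hyx := hM x y hxy
    have hx := hdiag x
    have hdx := hd x
    dsimp only [transitionWeight]
    rw [← ENNReal.ofReal_mul (div_nonneg (by linarith) (by linarith))]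
    refine ENNReal.ofReal_le_ofReal ?_
    rw [div_mul_div_comm, div_le_div_iff₀ (by nlinarith) (by linarith)]
    nlinarith [mul_nonneg (mul_nonneg hyx (sub_nonneg.2 hβγ)) (sub_nonneg.2 hdx)]

lemma reflTransGen_transitionWeight_pos (hdiag : ∀ x, A x x ≤ 0)
    (hirr : A.IsIrreducibleMetzlerChain) (hα : 0 < α) (x y : V) :
    ReflTransGen (fun a b => 0 < transitionWeight A α a b) x y := by
  rcases eq_or_ne x y with rfl | hxy
  · exact .refl
  · refine TransGen.to_reflTransGen (TransGen.mono (fun a b h => ?_) x y (hirr x y hxy))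
    exact ENNReal.ofReal_pos.2 (div_pos h.2 (by linarith [hdiag a]))

lemma continuousOn_toReal_transitionWeight (hdiag : ∀ x, A x x ≤ 0) (x y : V) :
    ContinuousOn (fun α => (transitionWeight A α x y).toReal) (Set.Ioi 0) := by
  simp only [transitionWeight, ENNReal.toReal_ofReal']
  refine ContinuousOn.sup (continuousOn_const.div (continuousOn_id.sub continuousOn_const)
    fun α hα => ?_) continuousOn_const
  have : (0 : ℝ) < α := hα
  linarith [hdiag x]

end Transition

section ExcursionWeight

variable {V : Type*} {A : Matrix V V ℝ} {σ : V}

lemma excursionWeight_antitoneOn (hM : A.IsMetzler) (hdiag : ∀ x, A x x ≤ 0) :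
    AntitoneOn (fun α => excursionWeight A α σ) (Set.Ioi 0) := fun β hβ _ _ hβγ => by
  simpa only [excursionWeight_eq_excursionSum] using
    excursionSum_mono (transitionWeight_antitone hM hdiag hβ hβγ)

variable [Fintype V]

lemma exists_lt_excursionWeight_ne_top (hM : A.IsMetzler) (hdiag : ∀ x, A x x ≤ 0)
    (hirr : A.IsIrreducibleMetzlerChain) {α : ℝ} (hα : 0 < α) (hfin : excursionWeight A α σ ≠ ∞) :
    ∃ β, 0 < β ∧ β < α ∧ excursionWeight A β σ ≠ ∞ := by
  classical
  rw [excursionWeight_eq_excursionSum] at hfin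
  obtain ⟨r, hr, hsum⟩ := exists_one_lt_excursionSum_const_mul_ne_top
    (fun _ _ => ENNReal.ofReal_ne_top) (reflTransGen_transitionWeight_pos hdiag hirr hα) hfin
  have hr' : (1 : ℝ) < r := hr
  have hβ : 0 < α / r := div_pos hα (by linarith)
  refine ⟨α / r, hβ, div_lt_self hα hr', ne_top_of_le_ne_top hsum ?_⟩
  rw [excursionWeight_eq_excursionSum]
  refine excursionSum_mono ((transitionWeight_le_mul hM hdiag hβ (div_le_self hα.le hr'.le)).trans
    fun x y => ?_)
  rw [div_div_cancel₀ hα.ne', ENNReal.ofReal_coe_nnreal]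
  exact le_rfl

lemma excursionWeight_pos [Nontrivial V] (hdiag : ∀ x, A x x ≤ 0)
    (hirr : A.IsIrreducibleMetzlerChain) {α : ℝ} (hα : 0 < α) : 0 < excursionWeight A α σ := by
  classical
  obtain ⟨τ, hτ⟩ := exists_ne σ
  rw [excursionWeight_eq_excursionSum]
  exact excursionSum_pos hτ (reflTransGen_transitionWeight_pos hdiag hirr hα σ τ)
    (reflTransGen_transitionWeight_pos hdiag hirr hα τ σ)

lemma excursionWeight_strictAntiOn [Nontrivial V] (hM : A.IsMetzler) (hdiag : ∀ x, A x x ≤ 0)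
    (hirr : A.IsIrreducibleMetzlerChain) :
    StrictAntiOn (fun α => (excursionWeight A α σ).toReal)
      {α | 0 < α ∧ excursionWeight A α σ < ∞} := by
  rintro a ⟨ha, hfa⟩ b ⟨hb, hfb⟩ hab
  have : Nonempty V := ⟨σ⟩
  obtain ⟨x₀, hx₀⟩ := Finite.exists_min fun x => A x x
  set k := ENNReal.ofReal ((b - A x₀ x₀) / (a - A x₀ x₀))
  have hk : 1 < k := by
    rw [ENNReal.one_lt_ofReal, one_lt_div (by linarith [hdiag x₀])]
    linarith
  have hpos : 0 < excursionWeight A b σ := excursionWeight_pos hdiag hirr hb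
  refine ENNReal.toReal_strict_mono hfa.ne ?_
  calc excursionWeight A b σ = 1 * excursionWeight A b σ := (one_mul _).symm
    _ < k * excursionWeight A b σ := (ENNReal.mul_lt_mul_iff_left hpos.ne' hfb.ne).2 hk
    _ ≤ excursionSum σ (fun x y => k * transitionWeight A b x y) := by
        rw [excursionWeight_eq_excursionSum]
        exact mul_excursionSum_le hk.le
    _ ≤ excursionWeight A a σ := by
        rw [excursionWeight_eq_excursionSum]
        exact excursionSum_mono (mul_transitionWeight_le hM hdiag hx₀ ha hab.le)

lemma continuousOn_toReal_excursionWeight (hM : A.IsMetzler) (hdiag : ∀ x, A x x ≤ 0)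
    (hirr : A.IsIrreducibleMetzlerChain) :
    ContinuousOn (fun α => (excursionWeight A α σ).toReal)
      {α | 0 < α ∧ excursionWeight A α σ < ∞} := by
  rintro α ⟨hα, hfin⟩
  obtain ⟨β, hβ, hβα, hβfin⟩ := exists_lt_excursionWeight_ne_top hM hdiag hirr hα hfin.ne
  have hcont : ContinuousOn (fun γ => (excursionWeight A γ σ).toReal) (Set.Ioi β) := by
    simp only [excursionWeight_eq_excursionSum] at hβfin ⊢
    exact continuousOn_toReal_excursionSum
      (fun x y => (continuousOn_toReal_transitionWeight hdiag x y).mono (Set.Ioi_subset_Ioi hβ.le))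
      (fun γ hγ => transitionWeight_antitone hM hdiag hβ (le_of_lt hγ)) hβfin
  exact (hcont.continuousAt (Ioi_mem_nhds hβα)).continuousWithinAt

end ExcursionWeight

theorem excursion_weight_structure_general {V : Type*} [Fintype V] [Nontrivial V]
    (A : Matrix V V ℝ)
    (hMetzler : A.IsMetzler) (hdiag : ∀ σ, A σ σ ≤ 0)
    (hirr : A.IsIrreducibleMetzlerChain) (σ : V) :
    AntitoneOn (fun α : ℝ => excursionWeight A α σ) (Set.Ioi 0) ∧
    (∃ α₀ : ℝ≥0∞, ∀ α : ℝ, 0 < α →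
      (excursionWeight A α σ = ∞ ↔ ENNReal.ofReal α ≤ α₀)) ∧
    StrictAntiOn (fun α : ℝ => (excursionWeight A α σ).toReal)
      {α : ℝ | 0 < α ∧ excursionWeight A α σ < ∞} ∧
    ContinuousOn (fun α : ℝ => (excursionWeight A α σ).toReal)
      {α : ℝ | 0 < α ∧ excursionWeight A α σ < ∞} := by
  have hanti := excursionWeight_antitoneOn (σ := σ) hMetzler hdiag
  have hupper : IsUpperSet {α : ℝ | 0 < α ∧ excursionWeight A α σ ≠ ∞} :=
    fun β γ hβγ ⟨hβ, hfin⟩ =>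
      ⟨hβ.trans_le hβγ, ne_top_of_le_ne_top hfin (hanti hβ (hβ.trans_le hβγ) hβγ)⟩
  obtain ⟨α₀, hα₀⟩ := hupper.exists_notMem_iff_ofReal_le fun α ⟨hα, hfin⟩ => by
    obtain ⟨β, hβ, hβα, hβfin⟩ := exists_lt_excursionWeight_ne_top hMetzler hdiag hirr hα hfin
    exact ⟨β, ⟨hβ, hβfin⟩, hβα⟩
  refine ⟨hanti, ⟨α₀, fun α hα => ?_⟩, excursionWeight_strictAntiOn hMetzler hdiag hirr,
    continuousOn_toReal_excursionWeight hMetzler hdiag hirr⟩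
  simpa [hα] using hα₀ α hα

/-- **Structure of the excursion-weight function.** For an irreducible Metzler
matrix `A` (on an index set with at least two elements) with nonpositive
diagonal and any fixed `σ`, the map `F : α ↦ f(α)_{σ→σ}` is: (i) antitone on
`(0,∞)`; (ii) infinite exactly on an initial segment `(0, α₀]` for some
`α₀ ∈ [0,∞]`; and (iii) real-valued, strictly decreasing and continuous on the
set where it is finite. -/
theorem excursion_weight_structure {V : Type*} [Fintype V] [DecidableEq V] [Nontrivial V]
    (A : Matrix V V ℝ)
    (hMetzler : A.IsMetzler) (hdiag : ∀ σ, A σ σ ≤ 0)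
    (hirr : A.IsIrreducibleMetzlerChain) (σ : V) :
    AntitoneOn (fun α : ℝ => excursionWeight A α σ) (Set.Ioi 0) ∧
    (∃ α₀ : ℝ≥0∞, ∀ α : ℝ, 0 < α →
      (excursionWeight A α σ = ∞ ↔ ENNReal.ofReal α ≤ α₀)) ∧
    StrictAntiOn (fun α : ℝ => (excursionWeight A α σ).toReal)
      {α : ℝ | 0 < α ∧ excursionWeight A α σ < ∞} ∧
    ContinuousOn (fun α : ℝ => (excursionWeight A α σ).toReal)
      {α : ℝ | 0 < α ∧ excursionWeight A α σ < ∞} :=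
  excursion_weight_structure_general A hMetzler hdiag hirr σ
end
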